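/- For any level s, s equals the potentiation of the set of levels in s: s = pot({r ∈ s : r is a level}). -/

import Mathlib

def pot (a : ZFSet) : ZFSet :=
  ZFSet.sep (fun x => ∃ c ∈ a, x ⊆ c) (ZFSet.powerset (ZFSet.sUnion a))

def Potent (a : ZFSet) : Prop := ∀ x, (∃ c, x ⊆ c ∧ c ∈ a) → x ∈ a

def IsHistory (h : ZFSet) : Prop := ∀ x ∈ h, x = pot (x ∩ h)

def IsLevel (s : ZFSet) : Prop := ∃ h, IsHistory h ∧ s = pot h

/-!
Every member `c` of a history `h` is transitive (by ∈-induction: `c = pot (c ∩ h)` and the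
members of `c ∩ h` are transitive), hence `c ∩ h` is again a history and `c = pot (c ∩ h)` is a
level. If `s = pot h`, then `h ⊆ s` consists of levels, so `s = pot h ⊆ pot {r ∈ s | IsLevel r}`;
conversely `pot` of any subset of `s` lies in `s` because `s`, being a `pot`, is downward closed.
-/

open ZFSet

lemma mem_pot {a x : ZFSet} : x ∈ pot a ↔ ∃ c ∈ a, x ⊆ c := by
  refine ⟨fun hx => (mem_sep.1 hx).2, fun ⟨c, hc, hxc⟩ => mem_sep.2 ⟨?_, c, hc, hxc⟩⟩
  exact mem_powerset.2 fun y hy => mem_sUnion.2 ⟨c, hc, hxc hy⟩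

lemma subset_pot (a : ZFSet) : a ⊆ pot a :=
  fun c hc => mem_pot.2 ⟨c, hc, fun _ hz => hz⟩

lemma pot_mono {a b : ZFSet} (hab : a ⊆ b) : pot a ⊆ pot b := fun x hx => by
  obtain ⟨c, hc, hxc⟩ := mem_pot.1 hx
  exact mem_pot.2 ⟨c, hab hc, hxc⟩

lemma potent_pot (a : ZFSet) : Potent (pot a) := by
  rintro x ⟨y, hxy, hy⟩
  obtain ⟨c, hc, hyc⟩ := mem_pot.1 hy
  exact mem_pot.2 ⟨c, hc, fun z hz => hyc (hxy hz)⟩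

lemma Potent.pot_subset {a : ZFSet} (ha : Potent a) : pot a ⊆ a :=
  fun x hx => ha x (by simpa only [mem_pot, and_comm] using hx)

namespace IsHistory

variable {h : ZFSet}

lemma isTransitive_of_mem (hh : IsHistory h) {c : ZFSet} (hc : c ∈ h) : c.IsTransitive := by
  induction c using inductionOn with
  | _ c ih =>
    intro x hx y hy
    rw [hh c hc] at hx ⊢
    obtain ⟨d, hd, hxd⟩ := mem_pot.1 hx
    obtain ⟨hdc, hdh⟩ := mem_inter.1 hd
    exact mem_pot.2 ⟨d, hd, (ih d hdc hdh).subset_of_mem (hxd hy)⟩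

lemma inter_of_mem (hh : IsHistory h) {a : ZFSet} (ha : a ∈ h) : IsHistory (a ∩ h) := by
  intro b hb
  obtain ⟨hba, hbh⟩ := mem_inter.1 hb
  have hbh_eq : b ∩ h = b ∩ (a ∩ h) := by
    ext c
    simp only [mem_inter]
    exact ⟨fun ⟨hcb, hch⟩ => ⟨hcb, (hh.isTransitive_of_mem ha).mem_trans hcb hba, hch⟩,
      fun ⟨hcb, _, hch⟩ => ⟨hcb, hch⟩⟩
  rw [← hbh_eq]
  exact hh b hbh

lemma isLevel_of_mem (hh : IsHistory h) {a : ZFSet} (ha : a ∈ h) : IsLevel a :=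
  ⟨a ∩ h, hh.inter_of_mem ha, hh a ha⟩

end IsHistory

theorem stmt5 (s : ZFSet) (hs : IsLevel s) : s = pot (ZFSet.sep IsLevel s) := by
  obtain ⟨h, hh, rfl⟩ := hs
  have h_sub_levels : h ⊆ ZFSet.sep IsLevel (pot h) :=
    fun c hc => mem_sep.2 ⟨subset_pot h hc, hh.isLevel_of_mem hc⟩
  exact subset_antisymm (pot_mono h_sub_levels)
    ((pot_mono sep_subset).trans (potent_pot h).pot_subset)
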